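/- For α > 0 and any fixed a ∈ ℝ, the second distributional derivative of x ↦ (1/2)|x − a| + (α/2) exp(−|x − a|/α) equals (1/(2α)) exp(−|x − a|/α); equivalently, for every test function φ ∈ C_c^∞(ℝ), ∫ ((1/2)|x − a| + (α/2) e^{−|x−a|/α}) φ''(x) dx = ∫ (1/(2α)) e^{−|x−a|/α} φ(x) dx. -/

import Mathlib

open MeasureTheory Set

/-- The second distributional derivative of `x ↦ ½|x−a| + (α/2) e^{−|x−a|/α}` is the
Laplace kernel `(1/(2α)) e^{−|x−a|/α}`: for every smooth compactly supported test
function `φ`, integrating against `φ''` reproduces integration of the kernel against `φ`. -/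
theorem laplace_potential_distributional_second_deriv (α a : ℝ) (hα : 0 < α) :
    ∀ φ : ℝ → ℝ, ContDiff ℝ (⊤ : ℕ∞) φ → HasCompactSupport φ →
      ∫ x : ℝ, ((1 / 2) * |x - a| + (α / 2) * Real.exp (-|x - a| / α)) * deriv (deriv φ) x
        = ∫ x : ℝ, (1 / (2 * α)) * Real.exp (-|x - a| / α) * φ x := by
  intro φ hφ hsupp
  set V : ℝ → ℝ := fun x => (1 / 2) * |x - a| + (α / 2) * Real.exp (-|x - a| / α) with hVdef
  set g : ℝ → ℝ := fun x => if a ≤ x then 1/2 - 1/2 * Real.exp (-(x-a)/α)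
      else -(1/2) + 1/2 * Real.exp ((x-a)/α) with hgdef
  set W : ℝ → ℝ := fun x => 1 / (2 * α) * Real.exp (-|x - a| / α) with hWdef
  have hα' : α ≠ 0 := ne_of_gt hα
  -- auxiliary smooth functions on each side
  -- right branch derivative computations
  have hfplus : ∀ x : ℝ, HasDerivAt (fun y => (1/2) * (y - a) + (α/2) * Real.exp (-(y-a)/α))
      (1/2 - 1/2 * Real.exp (-(x-a)/α)) x := by
    intro x
    have h1 : HasDerivAt (fun y : ℝ => -(y - a) / α) (-1 / α) x :=
      (((hasDerivAt_id x).sub_const a).neg).div_const α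
    have h2 : HasDerivAt (fun y : ℝ => Real.exp (-(y-a)/α)) (Real.exp (-(x-a)/α) * (-1/α)) x :=
      (Real.hasDerivAt_exp _).comp x h1
    have h3 := (((hasDerivAt_id x).sub_const a).const_mul (1/2 : ℝ)).add (h2.const_mul (α/2))
    refine h3.congr_deriv ?_
    field_simp
    try ring
  have hfminus : ∀ x : ℝ, HasDerivAt (fun y => -(1/2) * (y - a) + (α/2) * Real.exp ((y-a)/α))
      (-(1/2) + 1/2 * Real.exp ((x-a)/α)) x := by
    intro x
    have h1 : HasDerivAt (fun y : ℝ => (y - a) / α) (1 / α) x :=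
      ((hasDerivAt_id x).sub_const a).div_const α
    have h2 : HasDerivAt (fun y : ℝ => Real.exp ((y-a)/α)) (Real.exp ((x-a)/α) * (1/α)) x :=
      (Real.hasDerivAt_exp _).comp x h1
    have h3 := (((hasDerivAt_id x).sub_const a).const_mul (-(1/2) : ℝ)).add (h2.const_mul (α/2))
    refine h3.congr_deriv ?_
    field_simp
    try ring
  -- V agrees with the branches
  have hVplus : ∀ y ∈ Ici a, V y = (1/2) * (y - a) + (α/2) * Real.exp (-(y-a)/α) := by
    intro y hy
    have : |y - a| = y - a := abs_of_nonneg (by simpa using sub_nonneg.mpr (mem_Ici.mp hy))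
    simp [hVdef, this]
  have hVminus : ∀ y ∈ Iic a, V y = -(1/2) * (y - a) + (α/2) * Real.exp ((y-a)/α) := by
    intro y hy
    have h : |y - a| = -(y - a) := abs_of_nonpos (by simpa using sub_nonpos.mpr (mem_Iic.mp hy))
    simp [hVdef, h]
    ring_nf
  have hgplus : ∀ y ∈ Ici a, g y = 1/2 - 1/2 * Real.exp (-(y-a)/α) := by
    intro y hy; simp [hgdef, if_pos (mem_Ici.mp hy)]
  have hgminus : ∀ y ∈ Iic a, g y = -(1/2) + 1/2 * Real.exp ((y-a)/α) := by
    intro y hy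
    rcases eq_or_lt_of_le (mem_Iic.mp hy) with h | h
    · subst h; simp [hgdef]
    · simp [hgdef, if_neg (not_le.mpr h)]
  -- V has derivative g everywhere
  have hVwplus : ∀ x ∈ Ici a, HasDerivWithinAt V (g x) (Ici a) x := by
    intro x hx
    have := ((hfplus x).hasDerivWithinAt (s := Ici a)).congr hVplus (hVplus x hx)
    rwa [hgplus x hx]
  have hVwminus : ∀ x ∈ Iic a, HasDerivWithinAt V (g x) (Iic a) x := by
    intro x hx
    have := ((hfminus x).hasDerivWithinAt (s := Iic a)).congr hVminus (hVminus x hx)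
    rwa [hgminus x hx]
  have hVg : ∀ x : ℝ, HasDerivAt V (g x) x := by
    intro x
    rcases lt_trichotomy x a with h | h | h
    · exact (hVwminus x (le_of_lt h)).hasDerivAt (Iic_mem_nhds h)
    · subst h
      have := (hVwminus x Set.self_mem_Iic).union (hVwplus x Set.self_mem_Ici)
      rw [Iic_union_Ici] at this
      rw [hasDerivWithinAt_univ] at this; exact this
    · exact (hVwplus x (le_of_lt h)).hasDerivAt (Ici_mem_nhds h)
  -- derivatives of the branches of g
  have hhplus : ∀ x : ℝ, HasDerivAt (fun y => 1/2 - 1/2 * Real.exp (-(y-a)/α))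
      (1/(2*α) * Real.exp (-(x-a)/α)) x := by
    intro x
    have h1 : HasDerivAt (fun y : ℝ => -(y - a) / α) (-1 / α) x :=
      (((hasDerivAt_id x).sub_const a).neg).div_const α
    have h2 : HasDerivAt (fun y : ℝ => Real.exp (-(y-a)/α)) (Real.exp (-(x-a)/α) * (-1/α)) x :=
      (Real.hasDerivAt_exp _).comp x h1
    have h3 := (hasDerivAt_const x (1/2 : ℝ)).sub (h2.const_mul (1/2 : ℝ))
    refine h3.congr_deriv ?_
    field_simp
    try ring
  have hhminus : ∀ x : ℝ, HasDerivAt (fun y => -(1/2) + 1/2 * Real.exp ((y-a)/α))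
      (1/(2*α) * Real.exp ((x-a)/α)) x := by
    intro x
    have h1 : HasDerivAt (fun y : ℝ => (y - a) / α) (1 / α) x :=
      ((hasDerivAt_id x).sub_const a).div_const α
    have h2 : HasDerivAt (fun y : ℝ => Real.exp ((y-a)/α)) (Real.exp ((x-a)/α) * (1/α)) x :=
      (Real.hasDerivAt_exp _).comp x h1
    have h3 := (hasDerivAt_const x (-(1/2) : ℝ)).add (h2.const_mul (1/2 : ℝ))
    refine h3.congr_deriv ?_
    field_simp
    try ring
  have hWplus : ∀ x ∈ Ici a, W x = 1/(2*α) * Real.exp (-(x-a)/α) := by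
    intro x hx
    have : |x - a| = x - a := abs_of_nonneg (by simpa using sub_nonneg.mpr (mem_Ici.mp hx))
    simp [hWdef, this]
  have hWminus : ∀ x ∈ Iic a, W x = 1/(2*α) * Real.exp ((x-a)/α) := by
    intro x hx
    have h : |x - a| = -(x - a) := abs_of_nonpos (by simpa using sub_nonpos.mpr (mem_Iic.mp hx))
    simp [hWdef, h]
  have hgwplus : ∀ x ∈ Ici a, HasDerivWithinAt g (W x) (Ici a) x := by
    intro x hx
    have := ((hhplus x).hasDerivWithinAt (s := Ici a)).congr hgplus (hgplus x hx)
    rwa [hWplus x hx]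
  have hgwminus : ∀ x ∈ Iic a, HasDerivWithinAt g (W x) (Iic a) x := by
    intro x hx
    have := ((hhminus x).hasDerivWithinAt (s := Iic a)).congr hgminus (hgminus x hx)
    rwa [hWminus x hx]
  have hgW : ∀ x : ℝ, HasDerivAt g (W x) x := by
    intro x
    rcases lt_trichotomy x a with h | h | h
    · exact (hgwminus x (le_of_lt h)).hasDerivAt (Iic_mem_nhds h)
    · subst h
      have := (hgwminus x Set.self_mem_Iic).union (hgwplus x Set.self_mem_Ici)
      rw [Iic_union_Ici] at this
      rw [hasDerivWithinAt_univ] at this; exact this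
    · exact (hgwplus x (le_of_lt h)).hasDerivAt (Ici_mem_nhds h)
  -- continuity facts
  have hWcont : Continuous W := by
    apply Continuous.mul continuous_const
    exact Real.continuous_exp.comp (((continuous_abs.comp (continuous_id.sub continuous_const)).neg).div_const α)
  have hgcont : Continuous g :=
    (Differentiable.continuous (fun x => (hgW x).differentiableAt))
  have hφ' : ContDiff ℝ (⊤ : ℕ∞) φ := hφ.of_le (by simp)
  have hφd : ContDiff ℝ (⊤ : ℕ∞) (deriv φ) := (contDiff_infty_iff_deriv.mp hφ').2
  have hφdd_cont : Continuous (deriv (deriv φ)) :=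
    ((contDiff_infty_iff_deriv.mp hφd).2).continuous
  have hφd' : ∀ x : ℝ, HasDerivAt φ (deriv φ x) x :=
    fun x => (hφ.differentiable (by simp) x).hasDerivAt
  have hφdd : ∀ x : ℝ, HasDerivAt (deriv φ) (deriv (deriv φ) x) x :=
    fun x => ((contDiff_infty_iff_deriv.mp hφd).1 x).hasDerivAt
  -- choose a big interval containing the support
  obtain ⟨R, hR⟩ := hsupp.isBounded.subset_closedBall 0
  set d : ℝ := |R| + 1 with hddef
  set c : ℝ := -d with hcdef
  have hd0 : (0:ℝ) < d := by rw [hddef]; positivity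
  have hRd : R < d := lt_of_le_of_lt (le_abs_self R) (by rw [hddef]; linarith [abs_nonneg R])
  have hcd : c ≤ d := by rw [hcdef]; linarith
  have hsub : tsupport φ ⊆ Icc c d := by
    intro x hx
    have h := hR hx
    rw [Real.closedBall_eq_Icc] at h
    exact ⟨by rw [hcdef]; linarith [h.1], by linarith [h.2]⟩
  have hc_not : c ∉ tsupport φ := by
    intro hc
    have h := hR hc
    rw [Real.closedBall_eq_Icc] at h
    have h1 := h.1
    rw [hcdef] at h1
    linarith
  have hd_not : d ∉ tsupport φ := by
    intro hd
    have h := hR hd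
    rw [Real.closedBall_eq_Icc] at h
    linarith [h.2]
  have hc_not' : ∀ x : ℝ, x ∉ Icc c d → x ∉ tsupport φ := fun x hx h => hx (hsub h)
  -- vanishing of φ and derivatives outside support
  have hφ0 : ∀ x : ℝ, x ∉ tsupport φ → φ x = 0 := fun x hx => image_eq_zero_of_notMem_tsupport hx
  have hφd0 : ∀ x : ℝ, x ∉ tsupport φ → deriv φ x = 0 := by
    intro x hx
    by_contra h
    exact hx (support_deriv_subset (by simpa using h))
  have hφdd0 : ∀ x : ℝ, x ∉ tsupport φ → deriv (deriv φ) x = 0 := by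
    intro x hx
    by_contra h
    have h1 : x ∈ tsupport (deriv φ) := support_deriv_subset (by simpa using h)
    have h2 : tsupport (deriv φ) ⊆ tsupport φ :=
      closure_minimal support_deriv_subset isClosed_closure
    exact hx (h2 h1)
  -- convert whole-line integrals to interval integrals
  have hleft : (∫ x : ℝ, V x * deriv (deriv φ) x) = ∫ x in c..d, V x * deriv (deriv φ) x := by
    rw [intervalIntegral.integral_of_le hcd, ← integral_Icc_eq_integral_Ioc]
    exact (setIntegral_eq_integral_of_forall_compl_eq_zero
      (fun x hx => by rw [hφdd0 x (hc_not' x hx)]; ring)).symm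
  have hright : (∫ x : ℝ, W x * φ x) = ∫ x in c..d, W x * φ x := by
    rw [intervalIntegral.integral_of_le hcd, ← integral_Icc_eq_integral_Ioc]
    exact (setIntegral_eq_integral_of_forall_compl_eq_zero
      (fun x hx => by rw [hφ0 x (hc_not' x hx)]; ring)).symm
  -- first integration by parts
  have ibp1 : (∫ x in c..d, V x * deriv (deriv φ) x) = - ∫ x in c..d, g x * deriv φ x := by
    have := intervalIntegral.integral_mul_deriv_eq_deriv_mul
      (u := V) (u' := g) (v := deriv φ) (v' := deriv (deriv φ))
      (fun x _ => hVg x) (fun x _ => hφdd x)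
      (hgcont.intervalIntegrable c d) (hφdd_cont.intervalIntegrable c d)
    rw [this, hφd0 c hc_not, hφd0 d hd_not]
    ring
  -- second integration by parts
  have ibp2 : (∫ x in c..d, g x * deriv φ x) = - ∫ x in c..d, W x * φ x := by
    have := intervalIntegral.integral_mul_deriv_eq_deriv_mul
      (u := g) (u' := W) (v := φ) (v' := deriv φ)
      (fun x _ => hgW x) (fun x _ => hφd' x)
      (hWcont.intervalIntegrable c d) ((hφd.continuous).intervalIntegrable c d)
    rw [this, hφ0 c hc_not, hφ0 d hd_not]
    ring
  calc (∫ x : ℝ, V x * deriv (deriv φ) x)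
      = ∫ x in c..d, V x * deriv (deriv φ) x := hleft
    _ = - ∫ x in c..d, g x * deriv φ x := ibp1
    _ = ∫ x in c..d, W x * φ x := by rw [ibp2]; ring
    _ = ∫ x : ℝ, W x * φ x := hright.symm
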